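/- arXiv:1409.6976 — 5 statements merged into one kernel-verified Lean document; each statement's English description precedes it below -/
import Mathlib

section
/- (Properties of the graded time mesh). Let T > 0, γ ≥ 1, N ≥ 1 an integer, k = T^{1/γ}/N, and t_n = (n k)^γ for 0 ≤ n ≤ N, with k_n = t_n − t_{n−1}. Then: (a) k_n ≤ γ k t_n^{1−1/γ} for all 1 ≤ n ≤ N; (b) t_n ≤ 2^γ t_{n−1} for all 2 ≤ n ≤ N; and (c) the step sizes are nondecreasing, i.e., k_i ≤ k_j whenever 1 ≤ i ≤ j ≤ N. -/
open Real

/-!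
On `[0, ∞)` the map `x ↦ (x k)^γ` is convex for `γ ≥ 1`, and the mesh samples it at the integers.
Convexity makes consecutive differences nondecreasing (c), and bounds each difference by the
derivative `γ k (n k)^{γ-1} = γ k t_n^{1-1/γ}` at the right endpoint (a). Part (b) is monotonicity
of `x ↦ x^γ` applied to `n ≤ 2 (n - 1)`.
-/

theorem rpow_sub_rpow_le_mul_rpow_sub_one {γ a b : ℝ} (hγ : 1 ≤ γ) (ha : 0 ≤ a) (hab : a ≤ b) :
    b ^ γ - a ^ γ ≤ γ * b ^ (γ - 1) * (b - a) := by
  rcases hab.eq_or_lt with rfl | hab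
  · simp
  have hslope : slope (fun x : ℝ ↦ x ^ γ) a b ≤ γ * b ^ (γ - 1) :=
    (convexOn_rpow hγ).slope_le_of_hasDerivAt ha (ha.trans hab.le) hab
      (hasDerivAt_rpow_const (Or.inr hγ))
  rwa [slope_def_field, div_le_iff₀ (sub_pos.mpr hab)] at hslope

theorem ConvexOn.monotone_natCast_mul_succ_sub {f : ℝ → ℝ} (hf : ConvexOn ℝ (Set.Ici 0) f)
    {h : ℝ} (hh : 0 ≤ h) : Monotone fun n : ℕ ↦ f ((n + 1) * h) - f (n * h) := by
  rcases hh.eq_or_lt with rfl | hh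
  · simp [monotone_const]
  refine monotone_nat_of_le_succ fun n ↦ ?_
  have hslope := hf.slope_mono_adjacent (x := n * h) (y := (n + 1) * h) (z := (n + 1 + 1) * h)
    (by simp only [Set.mem_Ici]; positivity) (by simp only [Set.mem_Ici]; positivity)
    (by nlinarith) (by nlinarith)
  have hstep₁ : (n + 1) * h - n * h = h := by ring
  have hstep₂ : (n + 1 + 1) * h - (n + 1) * h = h := by ring
  rw [hstep₁, hstep₂, div_le_div_iff_of_pos_right hh] at hslope
  simpa using hslope

noncomputable def gradedMesh (k γ : ℝ) (n : ℕ) : ℝ := ((n : ℝ) * k) ^ γ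

section gradedMesh

variable {k γ : ℝ}

theorem gradedMesh_succ_sub_le (hk : 0 ≤ k) (hγ : 1 ≤ γ) (n : ℕ) :
    gradedMesh k γ (n + 1) - gradedMesh k γ n ≤ γ * k * gradedMesh k γ (n + 1) ^ (1 - 1 / γ) := by
  have hpow : gradedMesh k γ (n + 1) ^ (1 - 1 / γ) = (((n + 1 : ℕ) : ℝ) * k) ^ (γ - 1) := by
    rw [gradedMesh, ← rpow_mul (by positivity)]
    congr 1
    field_simp
  have hdiff : ((n + 1 : ℕ) : ℝ) * k - n * k = k := by push_cast; ring
  calc gradedMesh k γ (n + 1) - gradedMesh k γ n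
      ≤ γ * (((n + 1 : ℕ) : ℝ) * k) ^ (γ - 1) * (((n + 1 : ℕ) : ℝ) * k - n * k) :=
        rpow_sub_rpow_le_mul_rpow_sub_one hγ (by positivity) (by gcongr; simp)
    _ = γ * k * gradedMesh k γ (n + 1) ^ (1 - 1 / γ) := by rw [hpow, hdiff]; ring

theorem gradedMesh_succ_le_two_rpow_mul (hk : 0 ≤ k) (hγ : 0 ≤ γ) {n : ℕ} (hn : 1 ≤ n) :
    gradedMesh k γ (n + 1) ≤ 2 ^ γ * gradedMesh k γ n := by
  have hn' : (1 : ℝ) ≤ n := by exact_mod_cast hn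
  rw [gradedMesh, gradedMesh, ← mul_rpow zero_le_two (by positivity)]
  refine rpow_le_rpow (by positivity) ?_ hγ
  push_cast
  nlinarith

theorem monotone_gradedMesh_succ_sub (hk : 0 ≤ k) (hγ : 1 ≤ γ) :
    Monotone fun n ↦ gradedMesh k γ (n + 1) - gradedMesh k γ n := by
  simpa [gradedMesh] using (convexOn_rpow hγ).monotone_natCast_mul_succ_sub hk

end gradedMesh

theorem graded_mesh_properties_general
    (T γ : ℝ) (hT : 0 < T) (hγ : 1 ≤ γ) (N : ℕ)
    (k : ℝ) (hk : k = T ^ (1 / γ) / N)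
    (t : ℕ → ℝ) (ht : ∀ n, t n = ((n : ℝ) * k) ^ γ) :
    (∀ n, 1 ≤ n → n ≤ N →
        t n - t (n - 1) ≤ γ * k * (t n) ^ (1 - 1 / γ)) ∧
    (∀ n, 2 ≤ n → n ≤ N → t n ≤ 2 ^ γ * t (n - 1)) ∧
    (∀ i j, 1 ≤ i → i ≤ j → j ≤ N →
        t i - t (i - 1) ≤ t j - t (j - 1)) := by
  have hk0 : 0 ≤ k := hk ▸ by positivity
  obtain rfl : t = gradedMesh k γ := funext ht
  refine ⟨fun n hn _ ↦ ?_, fun n hn _ ↦ ?_, fun i j hi hij _ ↦ ?_⟩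
  · obtain ⟨n, rfl⟩ := Nat.exists_eq_add_of_le' hn
    simpa using gradedMesh_succ_sub_le hk0 hγ n
  · obtain ⟨n, rfl⟩ := Nat.exists_eq_add_of_le' hn
    simpa using gradedMesh_succ_le_two_rpow_mul hk0 (by linarith) (by omega : 1 ≤ n + 1)
  · obtain ⟨i, rfl⟩ := Nat.exists_eq_add_of_le' hi
    obtain ⟨j, rfl⟩ := Nat.exists_eq_add_of_le' (hi.trans hij)
    simpa using monotone_gradedMesh_succ_sub hk0 hγ (by omega : i ≤ j)

/-- Properties of the graded time mesh `t_n = (nk)^γ`, `k = T^{1/γ}/N`: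
(a) `k_n ≤ γ k t_n^{1-1/γ}`; (b) `t_n ≤ 2^γ t_{n-1}` for `n ≥ 2`;
(c) the step sizes `k_n = t_n - t_{n-1}` are nondecreasing. -/
theorem graded_mesh_properties
    (T γ : ℝ) (hT : 0 < T) (hγ : 1 ≤ γ) (N : ℕ) (hN : 1 ≤ N)
    (k : ℝ) (hk : k = T ^ (1 / γ) / N)
    (t : ℕ → ℝ) (ht : ∀ n, t n = ((n : ℝ) * k) ^ γ) :
    (∀ n, 1 ≤ n → n ≤ N →
        t n - t (n - 1) ≤ γ * k * (t n) ^ (1 - 1 / γ)) ∧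
    (∀ n, 2 ≤ n → n ≤ N → t n ≤ 2 ^ γ * t (n - 1)) ∧
    (∀ i j, 1 ≤ i → i ≤ j → j ≤ N →
        t i - t (i - 1) ≤ t j - t (j - 1)) :=
  graded_mesh_properties_general T γ hT hγ N k hk t ht
end

section
/- (Local memory-term bound, estimate of I₁). Let −1 < α < 0, a < b, and let φ : [a,b] → [0,∞) be integrable. Then ∫_a^b ∫_a^q ω_{α+1}(q−s) · (∫_s^b φ(t) dt) · φ(q) ds dq ≤ ω_{α+2}(b−a) · (∫_a^b φ(t) dt)², where ω_{α+1}(t) = t^α/Γ(α+1) and ω_{α+2}(t) = t^{α+1}/Γ(α+2). -/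
open MeasureTheory Real Set intervalIntegral

/-- Local memory-term bound (estimate of `I₁`): for `-1 < α < 0`, `a < b` and an
integrable nonnegative `φ` on `[a,b]`,
`∫_a^b ∫_a^q ω_{α+1}(q-s) (∫_s^b φ) φ(q) ds dq ≤ ω_{α+2}(b-a) (∫_a^b φ)²`,
where `ω_{α+1}(t) = t^α/Γ(α+1)` and `ω_{α+2}(t) = t^{α+1}/Γ(α+2)`. -/
theorem local_memory_term_bound (α a b : ℝ) (hα1 : -1 < α) (hα0 : α < 0) (hab : a < b)
    (φ : ℝ → ℝ) (hφint : IntervalIntegrable φ volume a b)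
    (hφpos : ∀ t ∈ Set.Icc a b, 0 ≤ φ t) :
    (∫ q in a..b, ∫ s in a..q,
        (q - s) ^ α / Real.Gamma (α + 1) * (∫ u in s..b, φ u) * φ q) ≤
      (b - a) ^ (α + 1) / Real.Gamma (α + 2) * (∫ u in a..b, φ u) ^ 2 := by
  have hα1' : (0:ℝ) < α + 1 := by linarith
  have hΓ1 : 0 < Real.Gamma (α + 1) := Real.Gamma_pos_of_pos hα1'
  have hΓ2 : 0 < Real.Gamma (α + 2) := Real.Gamma_pos_of_pos (by linarith)
  set C : ℝ := ∫ u in a..b, φ u with hC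
  have hCnn : 0 ≤ C := intervalIntegral.integral_nonneg hab.le hφpos
  set D : ℝ := (b - a) ^ (α + 1) / Real.Gamma (α + 2) * C with hD
  have hDnn : 0 ≤ D := by
    apply mul_nonneg (div_nonneg (Real.rpow_nonneg (by linarith) _) hΓ2.le) hCnn
  -- the inner integral, as a function of q
  set F : ℝ → ℝ := fun q => ∫ s in a..q,
      (q - s) ^ α / Real.Gamma (α + 1) * (∫ u in s..b, φ u) * φ q with hF
  -- subinterval integrability of φ
  have hsub : ∀ c d, c ∈ Set.Icc a b → d ∈ Set.Icc a b → IntervalIntegrable φ volume c d := by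
    intro c d hc hd
    apply hφint.mono_set
    refine Set.uIcc_subset_uIcc ?_ ?_ <;> rw [Set.uIcc_of_le hab.le]
    exacts [hc, hd]
  -- ∫ s..b φ ≤ C for s ∈ [a,b]
  have htailC : ∀ s ∈ Set.Icc a b, (∫ u in s..b, φ u) ≤ C := by
    intro s hs
    have h1 : IntervalIntegrable φ volume a s := hsub a s ⟨le_rfl, hab.le⟩ hs
    have h2 : IntervalIntegrable φ volume s b := hsub s b hs ⟨hab.le, le_rfl⟩
    have hadd : (∫ u in a..s, φ u) + (∫ u in s..b, φ u) = C :=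
      intervalIntegral.integral_add_adjacent_intervals h1 h2
    have hnn : 0 ≤ ∫ u in a..s, φ u :=
      intervalIntegral.integral_nonneg hs.1 fun t ht => hφpos t ⟨ht.1, ht.2.trans hs.2⟩
    linarith
  -- pointwise bound F q ≤ D * φ q on [a,b]
  have hFle : ∀ q ∈ Set.Icc a b, F q ≤ D * φ q := by
    intro q hq
    have hφq : 0 ≤ φ q := hφpos q hq
    have hFq : F q = (∫ s in a..q, (q - s) ^ α / Real.Gamma (α + 1) * (∫ u in s..b, φ u)) * φ q :=
      intervalIntegral.integral_mul_const _ _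
    rw [hFq]
    have hker : IntervalIntegrable (fun s => (q - s) ^ α / Real.Gamma (α + 1)) volume a q := by
      have := (intervalIntegrable_rpow' hα1 (a := q - a) (b := q - q)).comp_sub_left q
      simpa using this.div_const _
    have htailcont : ContinuousOn (fun s => ∫ u in s..b, φ u) (Set.uIcc a q) := by
      have hint : IntegrableOn φ (Set.uIcc a b) volume := by
        rw [Set.uIcc_of_le hab.le]
        exact (intervalIntegrable_iff_integrableOn_Icc_of_le hab.le).mp hφint
      exact (continuousOn_primitive_interval_left hint).mono
        (by rw [Set.uIcc_of_le hab.le, Set.uIcc_of_le hq.1]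
            exact Set.Icc_subset_Icc le_rfl hq.2)
    have hint1 : IntervalIntegrable
        (fun s => (q - s) ^ α / Real.Gamma (α + 1) * (∫ u in s..b, φ u)) volume a q :=
      hker.mul_continuousOn htailcont
    have hint2 : IntervalIntegrable
        (fun s => (q - s) ^ α / Real.Gamma (α + 1) * C) volume a q := hker.mul_const _
    have hmono : (∫ s in a..q, (q - s) ^ α / Real.Gamma (α + 1) * (∫ u in s..b, φ u))
        ≤ ∫ s in a..q, (q - s) ^ α / Real.Gamma (α + 1) * C := by
      apply intervalIntegral.integral_mono_on hq.1 hint1 hint2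
      intro s hs
      have hker_nn : 0 ≤ (q - s) ^ α / Real.Gamma (α + 1) :=
        div_nonneg (Real.rpow_nonneg (by linarith [hs.2]) _) hΓ1.le
      exact mul_le_mul_of_nonneg_left (htailC s ⟨hs.1, hs.2.trans hq.2⟩) hker_nn
    have hval : (∫ s in a..q, (q - s) ^ α / Real.Gamma (α + 1) * C)
        = (q - a) ^ (α + 1) / Real.Gamma (α + 2) * C := by
      rw [intervalIntegral.integral_mul_const]
      congr 1
      have h1 : (∫ s in a..q, (q - s) ^ α / Real.Gamma (α + 1))
          = (∫ s in a..q, (q - s) ^ α) / Real.Gamma (α + 1) :=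
        intervalIntegral.integral_div _ _
      have h2 : (∫ s in a..q, (q - s) ^ α) = ∫ x in (0:ℝ)..(q - a), x ^ α := by
        have := intervalIntegral.integral_comp_sub_left (a := a) (b := q)
          (fun x => x ^ α) q
        simpa using this
      have h3 : (∫ x in (0:ℝ)..(q - a), x ^ α) = (q - a) ^ (α + 1) / (α + 1) := by
        rw [integral_rpow (Or.inl hα1)]
        rw [Real.zero_rpow (by positivity)]
        ring
      rw [h1, h2, h3]
      have hΓ : Real.Gamma (α + 2) = (α + 1) * Real.Gamma (α + 1) := by
        have h := Real.Gamma_add_one (show (α + 1 : ℝ) ≠ 0 by positivity)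
        rw [show α + 1 + 1 = α + 2 by ring] at h
        exact h
      rw [hΓ, div_div]
    have hqa : (q - a) ^ (α + 1) ≤ (b - a) ^ (α + 1) :=
      Real.rpow_le_rpow (by linarith [hq.1]) (by linarith [hq.2]) hα1'.le
    calc (∫ s in a..q, (q - s) ^ α / Real.Gamma (α + 1) * (∫ u in s..b, φ u)) * φ q
        ≤ ((q - a) ^ (α + 1) / Real.Gamma (α + 2) * C) * φ q := by
          rw [← hval]; exact mul_le_mul_of_nonneg_right hmono hφq
      _ ≤ D * φ q := by
          rw [hD]
          gcongr
  -- conclude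
  by_cases hFint : IntervalIntegrable F volume a b
  · have h1 : (∫ q in a..b, F q) ≤ ∫ q in a..b, D * φ q :=
      intervalIntegral.integral_mono_on hab.le hFint (hφint.const_mul D) hFle
    have h2 : (∫ q in a..b, D * φ q) = D * C := by
      rw [intervalIntegral.integral_const_mul]
    calc (∫ q in a..b, F q) ≤ D * C := h1.trans_eq h2
      _ = (b - a) ^ (α + 1) / Real.Gamma (α + 2) * C ^ 2 := by rw [hD]; ring
  · rw [show (∫ q in a..b, ∫ s in a..q,
        (q - s) ^ α / Real.Gamma (α + 1) * (∫ u in s..b, φ u) * φ q) = ∫ q in a..b, F q from rfl,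
      intervalIntegral.integral_undef hFint]
    exact mul_nonneg (div_nonneg (Real.rpow_nonneg (by linarith) _) hΓ2.le) (sq_nonneg _)
end

section
/- (Derivative of the linear interpolation error on the first interval). Let k₁ > 0 and let u : [0, k₁] → ℝ be continuously differentiable. There is a unique polynomial Πu of degree ≤ 1 with Πu(k₁) = u(k₁) and ∫₀^{k₁} (u(t) − Πu(t)) dt = 0, and its error η = Πu − u satisfies, for every t ∈ [0, k₁], η′(t) = −u′(t) + (2/k₁²) ∫₀^{k₁} s u′(s) ds. Consequently, ∫₀^{k₁} |η′(t)| dt ≤ 3 ∫₀^{k₁} |u′(t)| dt. -/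
open MeasureTheory Real Set intervalIntegral Polynomial

/-!
Write `Πu = u(k) + c (t - k)` (this is `linearDGProjection k u`), so the endpoint condition
holds for every slope `c`. Integrating by parts, `∫₀^k (u - Πu) = c k²/2 - ∫₀^k s u'(s) ds`,
which fixes `c = (2/k²) ∫₀^k s u'(s) ds`; uniqueness holds because a polynomial of degree `≤ 1`
vanishing at `k` with zero integral over `(0, k)` is zero. Then `η' = c - u'`, and
`k |c| ≤ (2/k) ∫₀^k s |u'| ≤ 2 ∫₀^k |u'|`, which gives the constant `3`.
-/

theorem integral_id_mul_deriv {u u' : ℝ → ℝ} {a b : ℝ}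
    (hu : ∀ x ∈ uIcc a b, HasDerivAt u (u' x) x) (hu' : IntervalIntegrable u' volume a b) :
    ∫ s in a..b, s * u' s = b * u b - a * u a - ∫ s in a..b, u s := by
  simpa using integral_mul_deriv_eq_deriv_mul (fun x _ => hasDerivAt_id x) hu
    intervalIntegrable_const hu'

theorem abs_integral_id_mul_le {f : ℝ → ℝ} {b : ℝ} (hb : 0 ≤ b)
    (hf : IntervalIntegrable f volume 0 b) :
    |∫ s in (0:ℝ)..b, s * f s| ≤ b * ∫ s in (0:ℝ)..b, |f s| := by
  calc |∫ s in (0:ℝ)..b, s * f s| ≤ ∫ s in (0:ℝ)..b, |s * f s| :=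
        abs_integral_le_integral_abs hb
    _ ≤ ∫ s in (0:ℝ)..b, b * |f s| := by
        refine integral_mono_on hb (hf.continuousOn_mul continuousOn_id).abs
          (hf.abs.const_mul b) ?_
        intro s hs
        rw [abs_mul, abs_of_nonneg hs.1]
        exact mul_le_mul_of_nonneg_right hs.2 (abs_nonneg _)
    _ = b * ∫ s in (0:ℝ)..b, |f s| := integral_const_mul b _

theorem integral_abs_sub_const_le {f : ℝ → ℝ} {a b : ℝ} (hab : a ≤ b)
    (hf : IntervalIntegrable f volume a b) (c : ℝ) :
    ∫ s in a..b, |f s - c| ≤ (∫ s in a..b, |f s|) + (b - a) * |c| := by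
  calc ∫ s in a..b, |f s - c| ≤ ∫ s in a..b, (|f s| + |c|) :=
        integral_mono_on hab (hf.sub intervalIntegrable_const).abs
          (hf.abs.add intervalIntegrable_const) fun s _ => abs_sub _ _
    _ = (∫ s in a..b, |f s|) + (b - a) * |c| := by
        rw [integral_add hf.abs intervalIntegrable_const, intervalIntegral.integral_const,
          smul_eq_mul]

theorem Polynomial.eq_zero_of_degree_le_one_of_eval_of_integral {Q : ℝ[X]} {a b : ℝ}
    (hab : a ≠ b) (hQ : Q.degree ≤ 1) (hb : Q.eval b = 0) (hint : ∫ s in a..b, Q.eval s = 0) :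
    Q = 0 := by
  rw [eq_X_add_C_of_degree_le_one hQ] at hb hint ⊢
  set c₁ := Q.coeff 1
  set c₀ := Q.coeff 0
  simp only [eval_add, eval_mul, eval_C, eval_X] at hb hint
  rw [integral_add (intervalIntegrable_id.const_mul c₁) intervalIntegrable_const,
    intervalIntegral.integral_const_mul, integral_id, intervalIntegral.integral_const,
    smul_eq_mul] at hint
  have hsub : b - a ≠ 0 := sub_ne_zero.mpr hab.symm
  have hc₁ : c₁ = 0 := by
    have : c₁ * (b - a) ^ 2 = 0 := by linear_combination (-2) * hint + 2 * (b - a) * hb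
    simpa [hsub] using this
  have hc₀ : c₀ = 0 := by simpa [hc₁] using hb
  simp [hc₁, hc₀]

noncomputable def linearDGProjection (k : ℝ) (u : ℝ → ℝ) : ℝ[X] :=
  C (u k) + C (2 / k ^ 2 * ∫ s in (0:ℝ)..k, s * deriv u s) * (X - C k)

namespace linearDGProjection

variable {k : ℝ} {u : ℝ → ℝ}

theorem degree_le : (linearDGProjection k u).degree ≤ 1 := by
  unfold linearDGProjection
  compute_degree

theorem eval_eq (s : ℝ) : (linearDGProjection k u).eval s =
    u k + 2 / k ^ 2 * (∫ q in (0:ℝ)..k, q * deriv u q) * (s - k) := by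
  simp [linearDGProjection]

theorem eval_self : (linearDGProjection k u).eval k = u k := by
  simp [eval_eq]

theorem integral_sub_eq_zero (hk : k ≠ 0) (hu : ContDiff ℝ 1 u) :
    ∫ s in (0:ℝ)..k, (u s - (linearDGProjection k u).eval s) = 0 := by
  have hparts : ∫ q in (0:ℝ)..k, q * deriv u q = k * u k - ∫ s in (0:ℝ)..k, u s := by
    simpa using integral_id_mul_deriv (a := 0) (b := k)
      (fun x _ => ((hu.differentiable one_ne_zero) x).hasDerivAt)
      ((hu.continuous_deriv le_rfl).intervalIntegrable _ _)
  rw [intervalIntegral.integral_sub (hu.continuous.intervalIntegrable _ _)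
    ((Polynomial.continuous _).intervalIntegrable _ _)]
  simp only [eval_eq]
  rw [intervalIntegral.integral_add intervalIntegrable_const
    ((intervalIntegrable_id.sub intervalIntegrable_const).const_mul _)]
  simp only [intervalIntegral.integral_const_mul,
    integral_sub intervalIntegrable_id intervalIntegrable_const, integral_id,
    intervalIntegral.integral_const, smul_eq_mul, hparts]
  field_simp
  ring

theorem eq_of_integral_sub_eq_zero (hk : k ≠ 0) (hu : ContDiff ℝ 1 u) {P : ℝ[X]}
    (hP : P.degree ≤ 1) (hPk : P.eval k = u k)
    (hint : ∫ s in (0:ℝ)..k, (u s - P.eval s) = 0) : P = linearDGProjection k u := by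
  have hdiff : ∫ s in (0:ℝ)..k, (P - linearDGProjection k u).eval s = 0 := by
    have hu_int := hu.continuous.intervalIntegrable (μ := volume) 0 k
    have hP_int := P.continuous.intervalIntegrable (μ := volume) 0 k
    have hproj_int := (linearDGProjection k u).continuous.intervalIntegrable (μ := volume) 0 k
    calc ∫ s in (0:ℝ)..k, (P - linearDGProjection k u).eval s
        = ∫ s in (0:ℝ)..k, ((u s - (linearDGProjection k u).eval s) - (u s - P.eval s)) := by
          simp
      _ = 0 := by
          rw [intervalIntegral.integral_sub (hu_int.sub hproj_int) (hu_int.sub hP_int),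
            integral_sub_eq_zero hk hu, hint, sub_zero]
  refine sub_eq_zero.mp (eq_zero_of_degree_le_one_of_eval_of_integral hk.symm
    ((degree_sub_le _ _).trans (max_le hP degree_le)) ?_ hdiff)
  simp [hPk, eval_self]

theorem deriv_eval_sub {s : ℝ} (hu : DifferentiableAt ℝ u s) :
    deriv (fun y => (linearDGProjection k u).eval y - u y) s =
      -deriv u s + 2 / k ^ 2 * ∫ q in (0:ℝ)..k, q * deriv u q := by
  set c := 2 / k ^ 2 * ∫ q in (0:ℝ)..k, q * deriv u q
  have hproj : HasDerivAt (fun y => (linearDGProjection k u).eval y) c s := by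
    simp only [eval_eq]
    simpa using (((hasDerivAt_id s).sub_const k).const_mul c).const_add (u k)
  rw [(hproj.fun_sub hu.hasDerivAt).deriv, neg_add_eq_sub]

theorem integral_abs_deriv_eval_sub_le (hk : 0 < k) (hu : ContDiff ℝ 1 u) :
    ∫ s in (0:ℝ)..k, |deriv (fun y => (linearDGProjection k u).eval y - u y) s| ≤
      3 * ∫ s in (0:ℝ)..k, |deriv u s| := by
  set J := ∫ q in (0:ℝ)..k, q * deriv u q
  have hu' := (hu.continuous_deriv le_rfl).intervalIntegrable (μ := volume) 0 k
  have hslope : k * |2 / k ^ 2 * J| ≤ 2 * ∫ s in (0:ℝ)..k, |deriv u s| := by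
    rw [abs_mul, abs_of_pos (by positivity : (0:ℝ) < 2 / k ^ 2)]
    calc k * (2 / k ^ 2 * |J|) = 2 / k * |J| := by field_simp
      _ ≤ 2 / k * (k * ∫ s in (0:ℝ)..k, |deriv u s|) := by
          gcongr
          exact abs_integral_id_mul_le hk.le hu'
      _ = 2 * ∫ s in (0:ℝ)..k, |deriv u s| := by field_simp
  have hderiv (s : ℝ) : |deriv (fun y => (linearDGProjection k u).eval y - u y) s| =
      |deriv u s - 2 / k ^ 2 * J| := by
    rw [deriv_eval_sub ((hu.differentiable one_ne_zero) s), neg_add_eq_sub, abs_sub_comm]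
  simp only [hderiv]
  have := integral_abs_sub_const_le hk.le hu' (2 / k ^ 2 * J)
  rw [sub_zero] at this
  linarith

end linearDGProjection

/-- Derivative of the linear interpolation error on the first interval: there is a unique
polynomial `Πu` of degree `≤ 1` matching `u` at the right endpoint `k₁` and having the
same mean as `u` on `(0,k₁)`; its error `η = Πu - u` satisfies
`η′(t) = -u′(t) + (2/k₁²)∫₀^{k₁} s u′(s) ds`, and consequently
`∫₀^{k₁} |η′| ≤ 3 ∫₀^{k₁} |u′|`. -/
theorem linear_interpolation_error_first_interval
    (k₁ : ℝ) (hk : 0 < k₁) (u : ℝ → ℝ) (hu : ContDiff ℝ 1 u) :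
    (∃! P : Polynomial ℝ, P.degree ≤ 1 ∧ P.eval k₁ = u k₁ ∧
        (∫ s in (0:ℝ)..k₁, (u s - P.eval s)) = 0) ∧
    (∀ P : Polynomial ℝ, P.degree ≤ 1 → P.eval k₁ = u k₁ →
        (∫ s in (0:ℝ)..k₁, (u s - P.eval s)) = 0 →
      (∀ s ∈ Set.Icc (0:ℝ) k₁,
          deriv (fun y => P.eval y - u y) s =
            -deriv u s + (2 / k₁ ^ 2) * ∫ q in (0:ℝ)..k₁, q * deriv u q) ∧
      (∫ s in (0:ℝ)..k₁, |deriv (fun y => P.eval y - u y) s|) ≤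
        3 * ∫ s in (0:ℝ)..k₁, |deriv u s|) := by
  have hunique {P : ℝ[X]} := linearDGProjection.eq_of_integral_sub_eq_zero (P := P) hk.ne' hu
  refine ⟨⟨linearDGProjection k₁ u,
    ⟨linearDGProjection.degree_le, linearDGProjection.eval_self,
      linearDGProjection.integral_sub_eq_zero hk.ne' hu⟩,
    fun P hP => hunique hP.1 hP.2.1 hP.2.2⟩, ?_⟩
  rintro P hP hPk hint
  obtain rfl := hunique hP hPk hint
  exact ⟨fun s _ => linearDGProjection.deriv_eval_sub ((hu.differentiable one_ne_zero) s),
    linearDGProjection.integral_abs_deriv_eval_sub_le hk hu⟩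
end

section
/- (Minimization underlying the exponential convergence rate). Let a > 0 and define F : (0,1) → ℝ by F(c) = (a c)^{2c} · (1−c)^{1−c} / (1+c)^{1+c}. Then the infimum of F over (0,1) is attained at c_min = 1/√(1+a²), and F(c_min) < 1. -/
/-! With `m = 1/√(1+a²)`, the logarithm `g = rateExponent a` of `F` has derivative
`log ((a c)²) - log (1 - c²)`, which changes sign from negative to positive exactly where
`(a c)² = 1 - c²`, i.e. at `c = m`; so `m` minimizes `F`. At that point
`2 log (a m) = log (1 - m) + log (1 + m)`, which collapses `g m` to `log ((1 - m) / (1 + m))`,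
whence `F m = (1 - m) / (1 + m) < 1`. -/

open Real Set

noncomputable def rateExponent (a c : ℝ) : ℝ :=
  2 * c * log (a * c) + (1 - c) * log (1 - c) - (1 + c) * log (1 + c)

lemma rpow_rate_eq_exp_rateExponent {a c : ℝ} (hac : 0 < a * c) (hc : c ∈ Ioo (-1) 1) :
    (a * c) ^ (2 * c) * (1 - c) ^ (1 - c) / (1 + c) ^ (1 + c) = exp (rateExponent a c) := by
  rw [rpow_def_of_pos hac, rpow_def_of_pos (by linarith [hc.2]),
    rpow_def_of_pos (by linarith [hc.1]), ← exp_add, ← exp_sub, rateExponent]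
  ring_nf

lemma hasDerivAt_rateExponent {a x : ℝ} (ha : a ≠ 0) (hx : x ≠ 0) (hx₁ : 1 - x ≠ 0)
    (hx₂ : 1 + x ≠ 0) :
    HasDerivAt (rateExponent a) (log ((a * x) ^ 2) - log (1 - x ^ 2)) x := by
  have hax : HasDerivAt (fun c => log (a * c)) (a / (a * x)) x :=
    ((hasDerivAt_id x).const_mul a).log (mul_ne_zero ha hx) |>.congr_deriv (by simp)
  have hsub : HasDerivAt (fun c => log (1 - c)) (-1 / (1 - x)) x :=
    ((hasDerivAt_id x).const_sub 1).log hx₁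
  have hadd : HasDerivAt (fun c => log (1 + c)) (1 / (1 + x)) x :=
    ((hasDerivAt_id x).const_add 1).log hx₂
  have hsum := ((((hasDerivAt_id' x).const_mul 2).mul hax).add
    (((hasDerivAt_id' x).const_sub 1).mul hsub)).sub (((hasDerivAt_id' x).const_add 1).mul hadd)
  refine hsum.congr_deriv ?_
  rw [log_pow, show 1 - x ^ 2 = (1 - x) * (1 + x) by ring, log_mul hx₁ hx₂]
  field_simp
  push_cast
  ring

lemma isMinOn_rateExponent {a m : ℝ} (ha : 0 < a) (hm : m ∈ Ioo 0 1)
    (hcrit : (a * m) ^ 2 = 1 - m ^ 2) : IsMinOn (rateExponent a) (Ioo 0 1) m := by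
  have hderiv : ∀ x ∈ Ioo (0 : ℝ) 1,
      HasDerivAt (rateExponent a) (log ((a * x) ^ 2) - log (1 - x ^ 2)) x := fun x hx =>
    hasDerivAt_rateExponent ha.ne' hx.1.ne' (by linarith [hx.2]) (by linarith [hx.1])
  have hdiff (l u : ℝ) (hl : 0 ≤ l) (hu : u ≤ 1) :
      DifferentiableOn ℝ (rateExponent a) (Ioo l u) := fun x hx =>
    (hderiv x ⟨hl.trans_lt hx.1, hx.2.trans_le hu⟩).differentiableAt.differentiableWithinAt
  apply isMinOn_Ioo_of_deriv (hderiv m hm).continuousAt (hdiff 0 m le_rfl hm.2.le)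
    (hdiff m 1 hm.1.le le_rfl)
  · intro x hx
    have hx' : x ∈ Ioo (0 : ℝ) 1 := ⟨hx.1, hx.2.trans hm.2⟩
    have hsq : x ^ 2 ≤ m ^ 2 := pow_le_pow_left₀ hx.1.le hx.2.le 2
    rw [(hderiv x hx').deriv, sub_nonpos]
    exact log_le_log (pow_pos (mul_pos ha hx.1) 2)
      (by nlinarith [mul_le_mul_of_nonneg_left hsq (sq_nonneg a)])
  · intro x hx
    have hx' : x ∈ Ioo (0 : ℝ) 1 := ⟨hm.1.trans hx.1, hx.2⟩
    have hsq : m ^ 2 ≤ x ^ 2 := pow_le_pow_left₀ hm.1.le hx.1.le 2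
    rw [(hderiv x hx').deriv, sub_nonneg]
    exact log_le_log (by nlinarith [hx'.1, hx'.2])
      (by nlinarith [mul_le_mul_of_nonneg_left hsq (sq_nonneg a)])

lemma rateExponent_of_critical {a m : ℝ} (hm : m ∈ Ioo (-1) 1)
    (hcrit : (a * m) ^ 2 = 1 - m ^ 2) : rateExponent a m = log ((1 - m) / (1 + m)) := by
  have h₁ : 1 - m ≠ 0 := by linarith [hm.2]
  have h₂ : 1 + m ≠ 0 := by linarith [hm.1]
  have hlog : 2 * log (a * m) = log (1 - m) + log (1 + m) := by
    rw [← log_mul h₁ h₂, show (1 - m) * (1 + m) = (a * m) ^ 2 by rw [hcrit]; ring, log_pow]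
    norm_num
  rw [rateExponent, log_div h₁ h₂]
  linear_combination m * hlog

lemma one_div_sqrt_one_add_sq_mem_Ioo {a : ℝ} (ha : a ≠ 0) :
    1 / √(1 + a ^ 2) ∈ Ioo 0 1 := by
  have hs : 1 < √(1 + a ^ 2) := by
    rw [lt_sqrt zero_le_one]
    simpa using pow_pos (abs_pos.2 ha) 2
  exact ⟨by positivity, (div_lt_one (by linarith)).2 hs⟩

lemma mul_one_div_sqrt_one_add_sq_sq (a : ℝ) :
    (a * (1 / √(1 + a ^ 2))) ^ 2 = 1 - (1 / √(1 + a ^ 2)) ^ 2 := by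
  have hpos : 0 < 1 + a ^ 2 := by positivity
  rw [mul_pow, div_pow, one_pow, sq_sqrt hpos.le]
  field_simp
  ring

/-- Minimization underlying the exponential convergence rate: for `a > 0` and
`F(c) = (ac)^{2c} (1-c)^{1-c} / (1+c)^{1+c}` on `(0,1)`, the infimum of `F` is attained
at `c_min = 1/√(1+a²)`, and `F(c_min) < 1`. -/
theorem exponential_rate_minimization (a : ℝ) (ha : 0 < a) :
    (∀ c ∈ Set.Ioo (0:ℝ) 1,
        (a * (1 / Real.sqrt (1 + a ^ 2))) ^ (2 * (1 / Real.sqrt (1 + a ^ 2))) *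
            (1 - 1 / Real.sqrt (1 + a ^ 2)) ^ (1 - 1 / Real.sqrt (1 + a ^ 2)) /
            (1 + 1 / Real.sqrt (1 + a ^ 2)) ^ (1 + 1 / Real.sqrt (1 + a ^ 2)) ≤
          (a * c) ^ (2 * c) * (1 - c) ^ (1 - c) / (1 + c) ^ (1 + c)) ∧
    (a * (1 / Real.sqrt (1 + a ^ 2))) ^ (2 * (1 / Real.sqrt (1 + a ^ 2))) *
        (1 - 1 / Real.sqrt (1 + a ^ 2)) ^ (1 - 1 / Real.sqrt (1 + a ^ 2)) /
        (1 + 1 / Real.sqrt (1 + a ^ 2)) ^ (1 + 1 / Real.sqrt (1 + a ^ 2)) < 1 := by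
  set m := 1 / √(1 + a ^ 2)
  have hm : m ∈ Ioo 0 1 := one_div_sqrt_one_add_sq_mem_Ioo ha.ne'
  have hm' : m ∈ Ioo (-1) 1 := Ioo_subset_Ioo_left (by norm_num) hm
  have hcrit : (a * m) ^ 2 = 1 - m ^ 2 := mul_one_div_sqrt_one_add_sq_sq a
  rw [rpow_rate_eq_exp_rateExponent (mul_pos ha hm.1) hm']
  refine ⟨fun c hc => ?_, ?_⟩
  · rw [rpow_rate_eq_exp_rateExponent (mul_pos ha hc.1) ⟨by linarith [hc.1], hc.2⟩]
    exact exp_le_exp.2 (isMinOn_rateExponent ha hm hcrit hc)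
  · have h₁ : 0 < 1 + m := by linarith [hm.1]
    rw [rateExponent_of_critical hm' hcrit, exp_log (div_pos (by linarith [hm.2]) h₁),
      div_lt_one h₁]
    linarith [hm.1]
end

section
/- (Gamma-ratio bound for linearly increasing polynomial degrees). Let c ∈ (0,1) and x > 0 be fixed. Then there exists a constant C > 0 (depending only on c and x) such that for every integer p ≥ 1, setting q = c p (a real number), Γ(p−q+1)/Γ(p+q+1) · x^{2q} · Γ(q+1)² ≤ C p · ( (x c)^{2c} (1−c)^{1−c} / (1+c)^{1+c} )^p. -/
/-!
`Γ(t + 1)` is within constant factors of `√(t + 1) · t ^ t · e ^ (-t)` on all of `[0, ∞)`: for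
integers this is Stirling's bound for `n!`, and Wendel's inequality `Γ(s + θ) ≤ Γ(s) · s ^ θ`
(log-convexity of `Γ`) carries it over to real arguments. With `a = p - c p` and `b = c p`, the
exponentials cancel in `Γ(a + 1) Γ(b + 1)² / Γ(a + 2b + 1)`, the square roots leave a factor at
most `b + 1 ≤ 2p`, and `a ^ a (b ^ b)² x ^ (2b) / (a + 2b) ^ (a + 2b)` is exactly the `p`-th power
of `(x c) ^ (2c) (1 - c) ^ (1 - c) / (1 + c) ^ (1 + c)` by homogeneity.
-/

open Real

open scoped Nat

namespace Real

/-- One half of Wendel's inequality. -/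
theorem Gamma_add_le_Gamma_mul_rpow {s θ : ℝ} (hs : 0 < s) (hθ₀ : 0 ≤ θ) (hθ₁ : θ ≤ 1) :
    Gamma (s + θ) ≤ Gamma s * s ^ θ := by
  have hΓ : 0 < Gamma s := Gamma_pos_of_pos hs
  have hlog := convexOn_log_Gamma.2 (Set.mem_Ioi.2 hs) (Set.mem_Ioi.2 (by linarith : 0 < s + 1))
    (sub_nonneg.2 hθ₁) hθ₀ (sub_add_cancel 1 θ)
  simp only [smul_eq_mul, Function.comp_apply, Gamma_add_one hs.ne'] at hlog
  rw [show (1 - θ) * s + θ * (s + 1) = s + θ by ring, log_mul hs.ne' hΓ.ne'] at hlog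
  calc Gamma (s + θ) = exp (log (Gamma (s + θ))) :=
        (exp_log (Gamma_pos_of_pos (by linarith))).symm
    _ ≤ exp (log (Gamma s) + θ * log s) := exp_le_exp.2 (by linarith)
    _ = Gamma s * s ^ θ := by rw [exp_add, exp_log hΓ, rpow_def_of_pos hs, mul_comm θ]

end Real

/-- Stirling's approximation to `Γ(t + 1)`, with `√(t + 1)` in place of `√(2πt)` so that it stays
comparable to `Γ(t + 1)` as `t → 0` (note `0 ^ 0 = 1`). -/
noncomputable def stirlingApprox (t : ℝ) : ℝ := √(t + 1) * t ^ t * exp (-t)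

lemma rpow_self_pos {t : ℝ} (ht : 0 ≤ t) : 0 < t ^ t := by
  rcases ht.eq_or_lt with rfl | ht
  · simp
  · positivity

lemma stirlingApprox_pos {t : ℝ} (ht : 0 ≤ t) : 0 < stirlingApprox t := by
  have := rpow_self_pos ht
  unfold stirlingApprox
  positivity

lemma stirlingApprox_natCast (n : ℕ) :
    stirlingApprox n = √(n + 1) * (n / exp 1) ^ n := by
  rw [stirlingApprox, rpow_natCast, div_pow, ← exp_nat_mul, mul_one, exp_neg, div_eq_mul_inv,
    mul_assoc]

lemma factorial_le_exp_one_mul_stirlingApprox (n : ℕ) :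
    (n ! : ℝ) ≤ exp 1 * stirlingApprox n := by
  rw [stirlingApprox_natCast]
  rcases n.eq_zero_or_pos with rfl | hn
  · simp
  have hseq : Stirling.stirlingSeq n ≤ exp 1 / √2 := by
    obtain ⟨m, rfl⟩ := Nat.exists_eq_add_of_le' hn
    simpa [Stirling.stirlingSeq_one] using Stirling.stirlingSeq'_antitone (Nat.zero_le m)
  rw [Stirling.stirlingSeq, div_le_iff₀ (by positivity), sqrt_mul zero_le_two] at hseq
  calc (n ! : ℝ) ≤ exp 1 / √2 * (√2 * √n * (n / exp 1) ^ n) := hseq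
    _ = exp 1 * (√n * (n / exp 1) ^ n) := by field_simp
    _ ≤ exp 1 * (√(n + 1) * (n / exp 1) ^ n) := by gcongr; linarith

lemma stirlingApprox_le_factorial (n : ℕ) : stirlingApprox n ≤ n ! := by
  rw [stirlingApprox_natCast]
  rcases n.eq_zero_or_pos with rfl | hn
  · simp
  refine le_trans ?_ (Stirling.le_factorial_stirling n)
  have : (n : ℝ) + 1 ≤ 2 * π * n := by
    have : (1 : ℝ) ≤ n := by exact_mod_cast hn
    nlinarith [pi_gt_three]
  gcongr

lemma add_one_rpow_self_le {t : ℝ} (ht : 0 ≤ t) : (t + 1) ^ t ≤ exp 1 * t ^ t := by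
  rcases ht.eq_or_lt with rfl | ht
  · simp
  calc (t + 1) ^ t = (1 + 1 / t) ^ t * t ^ t := by
        rw [← mul_rpow (by positivity) ht.le]; field_simp
    _ ≤ exp (1 / t) ^ t * t ^ t := by
        gcongr; linarith [add_one_le_exp (1 / t)]
    _ = exp 1 * t ^ t := by rw [← exp_mul, one_div_mul_cancel ht.ne']

lemma exists_nat_add_of_nonneg {t : ℝ} (ht : 0 ≤ t) :
    ∃ (n : ℕ) (θ : ℝ), t = n + θ ∧ 0 ≤ θ ∧ θ ≤ 1 :=
  ⟨⌊t⌋₊, t - ⌊t⌋₊, by ring, sub_nonneg.2 (Nat.floor_le ht), by linarith [Nat.lt_floor_add_one t]⟩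

lemma Gamma_add_one_le_stirlingApprox {t : ℝ} (ht : 0 ≤ t) :
    Gamma (t + 1) ≤ exp 1 ^ 3 * stirlingApprox t := by
  obtain ⟨n, θ, rfl, hθ₀, hθ₁⟩ := exists_nat_add_of_nonneg ht
  have hexp : exp (-n) = exp θ * exp (-(n + θ)) := by rw [← exp_add]; ring_nf
  calc Gamma (n + θ + 1) = Gamma ((n + 1) + θ) := by ring_nf
    _ ≤ Gamma (n + 1) * (n + 1) ^ θ := Gamma_add_le_Gamma_mul_rpow (by positivity) hθ₀ hθ₁
    _ ≤ exp 1 * stirlingApprox n * (n + 1) ^ θ := by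
        rw [Gamma_nat_eq_factorial]; gcongr; exact factorial_le_exp_one_mul_stirlingApprox n
    _ = exp 1 * √(n + 1) * ((n : ℝ) ^ (n : ℝ) * (n + 1) ^ θ) * exp (-n) := by
        rw [stirlingApprox]; ring
    _ ≤ exp 1 * √(n + θ + 1) * ((n + θ + 1) ^ (n : ℝ) * (n + θ + 1) ^ θ) *
          (exp 1 * exp (-(n + θ))) := by
        rw [hexp]; gcongr <;> linarith
    _ = exp 1 ^ 2 * √(n + θ + 1) * (n + θ + 1) ^ (n + θ) * exp (-(n + θ)) := by
        rw [← rpow_add (by positivity)]; ring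
    _ ≤ exp 1 ^ 2 * √(n + θ + 1) * (exp 1 * (n + θ) ^ (n + θ)) * exp (-(n + θ)) := by
        gcongr; exact add_one_rpow_self_le (by positivity)
    _ = exp 1 ^ 3 * stirlingApprox (n + θ) := by rw [stirlingApprox]; ring

lemma stirlingApprox_le_Gamma_add_one {t : ℝ} (ht : 0 ≤ t) :
    stirlingApprox t ≤ 2 * exp 1 * Gamma (t + 1) := by
  obtain ⟨n, θ, rfl, hθ₀, hθ₁⟩ := exists_nat_add_of_nonneg ht
  have hpos : 0 < ((n : ℝ) + θ + 1) ^ (1 - θ) := by positivity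
  have hexp : exp (-(n + θ)) = exp (1 - θ) * exp (-(n + 1 : ℕ)) := by
    rw [← exp_add]; push_cast; ring_nf
  have hshift : ((n : ℝ) + θ + 1) ^ (1 - θ) ≤ 2 * ((n : ℝ) + 1) ^ (1 - θ) :=
    calc ((n : ℝ) + θ + 1) ^ (1 - θ) ≤ (2 * ((n : ℝ) + 1)) ^ (1 - θ) := by
          gcongr; linarith
      _ = 2 ^ (1 - θ) * ((n : ℝ) + 1) ^ (1 - θ) := mul_rpow (by norm_num) (by positivity)
      _ ≤ 2 * ((n : ℝ) + 1) ^ (1 - θ) := by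
          gcongr; exact rpow_le_self_of_one_le one_le_two (by linarith)
  refine le_of_mul_le_mul_right ?_ hpos
  calc stirlingApprox (n + θ) * (n + θ + 1) ^ (1 - θ)
      = √(n + θ + 1) * (n + θ) ^ (n + θ) * (n + θ + 1) ^ (1 - θ) * exp (-(n + θ)) := by
        rw [stirlingApprox]; ring
    _ ≤ √((n + 1 : ℕ) + 1) * ((n + 1 : ℕ) : ℝ) ^ (n + θ) * (2 * ((n + 1 : ℕ) : ℝ) ^ (1 - θ)) *
          (exp 1 * exp (-(n + 1 : ℕ))) := by
        rw [hexp]; push_cast; gcongr; linarith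
    _ = 2 * exp 1 * stirlingApprox (n + 1 : ℕ) := by
        have hpow : ((n + 1 : ℕ) : ℝ) ^ ((n : ℝ) + θ) * ((n + 1 : ℕ) : ℝ) ^ (1 - θ) =
            ((n + 1 : ℕ) : ℝ) ^ ((n + 1 : ℕ) : ℝ) := by
          rw [← rpow_add (by positivity)]; push_cast; ring_nf
        rw [stirlingApprox, ← hpow]; ring
    _ ≤ 2 * exp 1 * Gamma ((n + θ + 1) + (1 - θ)) := by
        rw [show (n : ℝ) + θ + 1 + (1 - θ) = (n + 1 : ℕ) + 1 by push_cast; ring,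
          Gamma_nat_eq_factorial]
        gcongr; exact stirlingApprox_le_factorial _
    _ ≤ 2 * exp 1 * (Gamma (n + θ + 1) * (n + θ + 1) ^ (1 - θ)) := by
        gcongr; exact Gamma_add_le_Gamma_mul_rpow (by positivity) (by linarith) (by linarith)
    _ = 2 * exp 1 * Gamma (n + θ + 1) * (n + θ + 1) ^ (1 - θ) := by ring

lemma Gamma_mul_Gamma_sq_div_Gamma_le {a b : ℝ} (ha : 0 ≤ a) (hb : 0 ≤ b) :
    Gamma (a + 1) * Gamma (b + 1) ^ 2 / Gamma (a + 2 * b + 1) ≤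
      2 * exp 1 ^ 10 * (b + 1) * (a ^ a * (b ^ b) ^ 2 / (a + 2 * b) ^ (a + 2 * b)) := by
  set s := a + 2 * b with hs
  have hs0 : 0 ≤ s := by positivity
  have := rpow_self_pos ha
  have := rpow_self_pos hb
  have := rpow_self_pos hs0
  have := stirlingApprox_pos ha
  have := stirlingApprox_pos hs0
  have hratio : stirlingApprox a * stirlingApprox b ^ 2 / stirlingApprox s =
      √(a + 1) / √(s + 1) * (b + 1) * (a ^ a * (b ^ b) ^ 2 / s ^ s) := by
    have hexp : exp (-a) * exp (-b) ^ 2 = exp (-s) := by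
      rw [← exp_nat_mul, ← exp_add, hs]; ring_nf
    simp only [stirlingApprox]
    field_simp
    rw [sq_sqrt (by linarith), ← hexp]; ring
  have hnum : Gamma (a + 1) * Gamma (b + 1) ^ 2 ≤
      exp 1 ^ 9 * (stirlingApprox a * stirlingApprox b ^ 2) :=
    calc Gamma (a + 1) * Gamma (b + 1) ^ 2
        ≤ exp 1 ^ 3 * stirlingApprox a * (exp 1 ^ 3 * stirlingApprox b) ^ 2 := by
          gcongr
          · exact Gamma_add_one_le_stirlingApprox ha
          · exact Gamma_add_one_le_stirlingApprox hb
      _ = exp 1 ^ 9 * (stirlingApprox a * stirlingApprox b ^ 2) := by ring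
  have hden : (2 * exp 1)⁻¹ * stirlingApprox s ≤ Gamma (s + 1) := by
    rw [inv_mul_le_iff₀ (by positivity)]; exact stirlingApprox_le_Gamma_add_one hs0
  calc Gamma (a + 1) * Gamma (b + 1) ^ 2 / Gamma (s + 1)
      ≤ exp 1 ^ 9 * (stirlingApprox a * stirlingApprox b ^ 2) /
          ((2 * exp 1)⁻¹ * stirlingApprox s) :=
        div_le_div₀ (by positivity) hnum (by positivity) hden
    _ = 2 * exp 1 ^ 10 * (√(a + 1) / √(s + 1) * (b + 1) * (a ^ a * (b ^ b) ^ 2 / s ^ s)) := by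
        rw [← hratio]; field_simp
    _ ≤ 2 * exp 1 ^ 10 * (1 * (b + 1) * (a ^ a * (b ^ b) ^ 2 / s ^ s)) := by
        gcongr
        exact div_le_one_of_le₀ (sqrt_le_sqrt (by linarith)) (sqrt_nonneg _)
    _ = 2 * exp 1 ^ 10 * (b + 1) * (a ^ a * (b ^ b) ^ 2 / s ^ s) := by ring

lemma rpow_self_mul_sq_div_rpow_self_eq {c x p : ℝ} (hc₀ : 0 < c) (hc₁ : c < 1) (hx : 0 < x)
    (hp : 0 < p) :
    (p - c * p) ^ (p - c * p) * ((c * p) ^ (c * p)) ^ 2 / (p + c * p) ^ (p + c * p) *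
        x ^ (2 * (c * p)) =
      ((x * c) ^ (2 * c) * (1 - c) ^ (1 - c) / (1 + c) ^ (1 + c)) ^ p := by
  have h₁ : 0 < 1 - c := by linarith
  rw [show p - c * p = (1 - c) * p by ring, show p + c * p = (1 + c) * p by ring]
  refine log_injOn_pos (Set.mem_Ioi.2 (by positivity)) (Set.mem_Ioi.2 (by positivity)) ?_
  simp (disch := positivity) only [log_mul, log_div, log_rpow, log_pow]
  push_cast
  ring

/-- Gamma-ratio bound for linearly increasing polynomial degrees: for fixed `c ∈ (0,1)`
and `x > 0` there is `C > 0` such that for every integer `p ≥ 1`, with `q = c p`,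
`Γ(p-q+1)/Γ(p+q+1) · x^{2q} · Γ(q+1)² ≤ C p ((xc)^{2c}(1-c)^{1-c}/(1+c)^{1+c})^p`. -/
theorem gamma_ratio_bound (c x : ℝ) (hc0 : 0 < c) (hc1 : c < 1) (hx : 0 < x) :
    ∃ C : ℝ, 0 < C ∧ ∀ p : ℕ, 1 ≤ p →
      Real.Gamma ((p : ℝ) - c * p + 1) / Real.Gamma ((p : ℝ) + c * p + 1) *
          x ^ (2 * (c * p)) * Real.Gamma (c * p + 1) ^ 2 ≤
        C * (p : ℝ) *
          ((x * c) ^ (2 * c) * (1 - c) ^ (1 - c) / (1 + c) ^ (1 + c)) ^ (p : ℝ) := by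
  refine ⟨4 * exp 1 ^ 10, by positivity, fun p hp => ?_⟩
  have hp₁ : (1 : ℝ) ≤ p := by exact_mod_cast hp
  have hGamma := Gamma_mul_Gamma_sq_div_Gamma_le (a := p - c * p) (b := c * p)
    (by nlinarith) (by positivity)
  rw [show (p : ℝ) - c * p + 2 * (c * p) = p + c * p by ring] at hGamma
  calc Gamma (p - c * p + 1) / Gamma (p + c * p + 1) * x ^ (2 * (c * p)) * Gamma (c * p + 1) ^ 2
      = Gamma (p - c * p + 1) * Gamma (c * p + 1) ^ 2 / Gamma (p + c * p + 1) *
          x ^ (2 * (c * p)) := by ring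
    _ ≤ 2 * exp 1 ^ 10 * (c * p + 1) * ((p - c * p) ^ (p - c * p) * ((c * p) ^ (c * p)) ^ 2 /
          (p + c * p) ^ (p + c * p)) * x ^ (2 * (c * p)) := by gcongr
    _ = 2 * exp 1 ^ 10 * (c * p + 1) *
          ((x * c) ^ (2 * c) * (1 - c) ^ (1 - c) / (1 + c) ^ (1 + c)) ^ (p : ℝ) := by
        rw [mul_assoc, rpow_self_mul_sq_div_rpow_self_eq hc0 hc1 hx (by positivity)]
    _ ≤ 4 * exp 1 ^ 10 * p *
          ((x * c) ^ (2 * c) * (1 - c) ^ (1 - c) / (1 + c) ^ (1 + c)) ^ (p : ℝ) := by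
        have hcp : c * p + 1 ≤ 2 * p := by nlinarith
        gcongr ?_ * _
        linarith [mul_le_mul_of_nonneg_left hcp (by positivity : (0 : ℝ) ≤ 2 * exp 1 ^ 10)]
end
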